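/- Let u : ℝⁿ → ℝ be smooth, let X(x) = (x, Du(x), u(x) − (1/2) x·Du(x)) ∈ ℝ^{2n+1}, and let f(x) = (1/16)(|x|² + |Du(x)|²). Then for every x ∈ ℝⁿ and every j = 1, …, n, ∂f/∂x_j(x) = (1/2) g_{X(x)}(X(x), ∂X/∂x_j(x)); i.e. the intrinsic gradient of f on the Legendrian graph equals one half of the tangential part of the position vector, ∇f = (1/2)X^T. -/

import Mathlib

open Real

/-- `i`-th partial derivative of `u` at `x` (component of the gradient `Du`). -/
noncomputable def pd {n : ℕ} (u : (Fin n → ℝ) → ℝ) (i : Fin n) (x : Fin n → ℝ) : ℝ :=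
  fderiv ℝ u x (Pi.single i 1)

/-- Hessian matrix `D²u(x)`. -/
noncomputable def hess {n : ℕ} (u : (Fin n → ℝ) → ℝ) (x : Fin n → ℝ) :
    Matrix (Fin n) (Fin n) ℝ :=
  Matrix.of fun i j => fderiv ℝ (fun y => fderiv ℝ u y (Pi.single j 1)) x (Pi.single i 1)

/-- The Legendrian angle `θ(x) = ∑ arctan λᵢ(x)`, where `λᵢ(x)` are the eigenvalues
(with multiplicity, i.e. the roots of the characteristic polynomial) of the Hessian. -/
noncomputable def legAngle {n : ℕ} (u : (Fin n → ℝ) → ℝ) (x : Fin n → ℝ) : ℝ :=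
  ((hess u x).charpoly.roots.map Real.arctan).sum

/-- The Legendrian graph map `X(x) = (x, Du(x), u(x) - (1/2) x·Du(x)) ∈ ℝⁿ×ℝⁿ×ℝ`. -/
noncomputable def Xmap {n : ℕ} (u : (Fin n → ℝ) → ℝ) (x : Fin n → ℝ) :
    (Fin n → ℝ) × (Fin n → ℝ) × ℝ :=
  (x, fun i => pd u i x, u x - (1/2) * ∑ i, x i * pd u i x)

/-- The standard contact form on `ℝ^{2n+1}`: at `p = (x, y, z)` acting on `v = (a, b, c)`,
`η_p(v) = (1/2)c - (1/4)∑ᵢ (yᵢ aᵢ - xᵢ bᵢ)`. -/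
noncomputable def eta {n : ℕ} (p v : (Fin n → ℝ) × (Fin n → ℝ) × ℝ) : ℝ :=
  (1/2) * v.2.2 - (1/4) * ∑ i, (p.2.1 i * v.1 i - p.1 i * v.2.1 i)

/-- The associated (contact) Riemannian metric on `ℝ^{2n+1}`:
`g_p(v,w) = (1/4)∑ᵢ (aᵢ a'ᵢ + bᵢ b'ᵢ) + η_p(v) η_p(w)`. -/
noncomputable def cmetric {n : ℕ} (p v w : (Fin n → ℝ) × (Fin n → ℝ) × ℝ) : ℝ :=
  (1/4) * ∑ i, (v.1 i * w.1 i + v.2.1 i * w.2.1 i) + eta p v * eta p w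

/-- The weight function `f(x) = (1/16)(|x|² + |Du(x)|²)`. -/
noncomputable def fwt {n : ℕ} (u : (Fin n → ℝ) → ℝ) (x : Fin n → ℝ) : ℝ :=
  (1/16) * (∑ i, x i ^ 2 + ∑ i, pd u i x ^ 2)

/-! The correction `-(1/2) x·Du` in the last coordinate of `X` makes the graph Legendrian: `η`
vanishes on every tangent vector `∂X/∂x_j`. Hence `g(X, ∂X/∂x_j)` reduces to its Euclidean
part `(1/4)(x_j + ∑ᵢ ∂ᵢu ∂ⱼ∂ᵢu)`, which is `2 ∂f/∂x_j`. -/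

section

variable {n : ℕ} {u : (Fin n → ℝ) → ℝ} {x : Fin n → ℝ}

theorem fderiv_apply_eq_sum_pd_mul (v : Fin n → ℝ) :
    fderiv ℝ u x v = ∑ i, pd u i x * v i := by
  conv_lhs => rw [← Finset.univ_sum_single v, map_sum]
  refine Finset.sum_congr rfl fun i _ => ?_
  rw [pd, mul_comm, ← smul_eq_mul, ← map_smul, ← Pi.single_smul, smul_eq_mul, mul_one]

theorem fderiv_fwt_apply (hDu : ∀ i, DifferentiableAt ℝ (pd u i) x) (v : Fin n → ℝ) :
    fderiv ℝ (fwt u) x v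
      = (1/8) * ∑ i, (x i * v i + pd u i x * fderiv ℝ (pd u i) x v) := by
  have hsq : HasFDerivAt (fun y : Fin n → ℝ => ∑ i, y i ^ 2) _ x :=
    HasFDerivAt.fun_sum fun i _ => (hasFDerivAt_apply (𝕜 := ℝ) i x).pow 2
  have hDsq : HasFDerivAt (fun y => ∑ i, pd u i y ^ 2) _ x :=
    HasFDerivAt.fun_sum fun i _ => (hDu i).hasFDerivAt.pow 2
  have hf : HasFDerivAt (fwt u) _ x := (hsq.fun_add hDsq).const_mul (1/16 : ℝ)
  rw [hf.fderiv]
  simp only [smul_apply, add_apply, sum_apply, ContinuousLinearMap.proj_apply, smul_eq_mul,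
    nsmul_eq_mul, Finset.mul_sum, ← Finset.sum_add_distrib]
  exact Finset.sum_congr rfl fun i _ => by ring

theorem fderiv_Xmap_apply (hu : DifferentiableAt ℝ u x)
    (hDu : ∀ i, DifferentiableAt ℝ (pd u i) x) (v : Fin n → ℝ) :
    fderiv ℝ (Xmap u) x v
      = (v, fun i => fderiv ℝ (pd u i) x v,
          ∑ i, pd u i x * v i - (1/2) * ∑ i, (pd u i x * v i + x i * fderiv ℝ (pd u i) x v)) := by
  have hgrad : HasFDerivAt (fun y i => pd u i y) _ x :=
    hasFDerivAt_pi.2 fun i => (hDu i).hasFDerivAt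
  have hz : HasFDerivAt (fun y => u y - (1/2) * ∑ i, y i * pd u i y) _ x :=
    hu.hasFDerivAt.sub ((HasFDerivAt.fun_sum fun i _ =>
      (hasFDerivAt_apply (𝕜 := ℝ) i x).mul (hDu i).hasFDerivAt).const_mul (1/2 : ℝ))
  have hX : HasFDerivAt (Xmap u) _ x := (hasFDerivAt_id x).prodMk (hgrad.prodMk hz)
  rw [hX.fderiv]
  simp [fderiv_apply_eq_sum_pd_mul (u := u), mul_comm, add_comm]

theorem eta_fderiv_Xmap_eq_zero (hu : DifferentiableAt ℝ u x)
    (hDu : ∀ i, DifferentiableAt ℝ (pd u i) x) (v : Fin n → ℝ) :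
    eta (Xmap u x) (fderiv ℝ (Xmap u) x v) = 0 := by
  rw [fderiv_Xmap_apply hu hDu v]
  simp only [eta, Xmap, Finset.sum_add_distrib, Finset.sum_sub_distrib]
  ring

theorem cmetric_eq_of_eta_eq_zero {p v w : (Fin n → ℝ) × (Fin n → ℝ) × ℝ} (h : eta p w = 0) :
    cmetric p v w = (1/4) * ∑ i, (v.1 i * w.1 i + v.2.1 i * w.2.1 i) := by
  simp [cmetric, h]

theorem fderiv_fwt_apply_eq_half_cmetric (hu : DifferentiableAt ℝ u x)
    (hDu : ∀ i, DifferentiableAt ℝ (pd u i) x) (v : Fin n → ℝ) :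
    fderiv ℝ (fwt u) x v
      = (1/2) * cmetric (Xmap u x) (Xmap u x) (fderiv ℝ (Xmap u) x v) := by
  rw [cmetric_eq_of_eta_eq_zero (eta_fderiv_Xmap_eq_zero hu hDu v), fderiv_fwt_apply hDu,
    fderiv_Xmap_apply hu hDu]
  simp only [Xmap]
  ring

end

/-- `∂f/∂x_j = (1/2) g(X, ∂X/∂x_j)`, i.e. the intrinsic gradient of `f`
on the Legendrian graph is one half of the tangential part of the position vector,
`∇f = (1/2) Xᵀ`. -/
theorem legendrian_graph_gradient_f {n : ℕ}
    (u : (Fin n → ℝ) → ℝ) (hu : ContDiff ℝ (⊤ : ℕ∞) u) :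
    ∀ (x : Fin n → ℝ) (j : Fin n),
      pd (fwt u) j x
        = (1/2) * cmetric (Xmap u x) (Xmap u x) (fderiv ℝ (Xmap u) x (Pi.single j 1)) := by
  intro x j
  have hDu (i : Fin n) : Differentiable ℝ (pd u i) :=
    ((hu.fderiv_right (m := 1) (WithTop.coe_le_coe.2 le_top)).differentiable
      one_ne_zero).clm_apply (differentiable_const _)
  exact fderiv_fwt_apply_eq_half_cmetric ((hu.differentiable (by simp)).differentiableAt)
    (fun i => hDu i x) (Pi.single j 1)
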